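/- In a right-angled Artin group G(Γ), if |g^n| = n|g| for some n ≥ 2, then |g^m| = m|g| for all m ≥ 2. -/

import Mathlib

/-- The commutation relators of the right-angled Artin group `G(Γ)`:
generators `v, w` commute whenever `{v, w}` is NOT an edge of `Γ`
(the convention of the paper). -/
def raagRels {V : Type} (Γ : SimpleGraph V) : Set (FreeGroup V) :=
  {r | ∃ v w : V, v ≠ w ∧ ¬ Γ.Adj v w ∧
    r = FreeGroup.of v * FreeGroup.of w * (FreeGroup.of v)⁻¹ * (FreeGroup.of w)⁻¹}

/-- The right-angled Artin group `G(Γ)` (paper's convention). -/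
abbrev RAAG {V : Type} (Γ : SimpleGraph V) := PresentedGroup (raagRels Γ)

/-- The generator of `G(Γ)` corresponding to a vertex. -/
def raagGen {V : Type} (Γ : SimpleGraph V) (v : V) : RAAG Γ := PresentedGroup.of v

/-- The group element corresponding to a letter `v` or `v⁻¹`
(a letter is a pair `(v, b)`, `b = true` meaning the positive letter `v`). -/
def raagLetter {V : Type} (Γ : SimpleGraph V) (l : V × Bool) : RAAG Γ :=
  if l.2 then raagGen Γ l.1 else (raagGen Γ l.1)⁻¹

/-- The element of `G(Γ)` represented by a word on `V(Γ)^{±1}`. -/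
def evalWord {V : Type} (Γ : SimpleGraph V) (w : List (V × Bool)) : RAAG Γ :=
  (w.map (raagLetter Γ)).prod

/-- The word length `|g|` of an element of `G(Γ)`. -/
noncomputable def wlen {V : Type} (Γ : SimpleGraph V) (g : RAAG Γ) : ℕ :=
  sInf {n | ∃ w : List (V × Bool), evalWord Γ w = g ∧ w.length = n}

/-- A word is reduced if no shorter word represents the same element. -/
def IsReducedWord {V : Type} (Γ : SimpleGraph V) (w : List (V × Bool)) : Prop :=
  w.length = wlen Γ (evalWord Γ w)

/-- The `n`-th power of a word (concatenation of `n` copies). -/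
def wpow {α : Type*} (w : List α) (n : ℕ) : List α := (List.replicate n w).flatten

/-- The support of `g`: the set of generators appearing in some reduced word
representing `g` (this set is known to be independent of the reduced word). -/
def Supp {V : Type} (Γ : SimpleGraph V) (g : RAAG Γ) : Set V :=
  {v | ∃ w : List (V × Bool), evalWord Γ w = g ∧ w.length = wlen Γ g ∧
        v ∈ w.map Prod.fst}

/-- `g` is cyclically reduced if its word length is minimal in its conjugacy class. -/
def CyclicallyReduced {V : Type} (Γ : SimpleGraph V) (g : RAAG Γ) : Prop :=
  ∀ u : RAAG Γ, wlen Γ g ≤ wlen Γ (u⁻¹ * g * u)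

/-- `g` is non-split if its support spans a connected subgraph of `Γ`. -/
def NonSplit {V : Type} (Γ : SimpleGraph V) (g : RAAG Γ) : Prop :=
  ((Γ.induce (Supp Γ g))).Connected

/-- `g` is strongly non-split if it is non-split and no generator disjointly
commutes with `g`. -/
def StronglyNonSplit {V : Type} (Γ : SimpleGraph V) (g : RAAG Γ) : Prop :=
  NonSplit Γ g ∧ ¬ ∃ v : V, v ∉ Supp Γ g ∧ ∀ u ∈ Supp Γ g, ¬ Γ.Adj v u

/-- The set `S(g)` of starting generators of `g`. -/
def SGen {V : Type} (Γ : SimpleGraph V) (g : RAAG Γ) : Set V :=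
  {v | ∃ (b : Bool) (h : RAAG Γ), g = raagLetter Γ (v, b) * h ∧
        wlen Γ g = 1 + wlen Γ h}

/-- `g` is SD-conical (w.r.t. a linear order on the vertices) if `S(g)` is a
singleton `{v₀}` and `v₀` does not commute with any smaller generator,
i.e. `{v, v₀} ∈ E(Γ)` for all `v < v₀`. -/
def SDConical {V : Type} (Γ : SimpleGraph V) (lo : LinearOrder V) (g : RAAG Γ) : Prop :=
  ∃ v₀ : V, SGen Γ g = {v₀} ∧ ∀ v : V, lo.lt v v₀ → Γ.Adj v v₀

/-- `g` is primitive if it is nontrivial and not a proper power. -/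
def RaagPrimitive {V : Type} (Γ : SimpleGraph V) (g : RAAG Γ) : Prop :=
  g ≠ 1 ∧ ∀ (u : RAAG Γ) (n : ℕ), g = u ^ n → n = 1

/-- The order on letters: extend the order on `V` so that each `v` is the
immediate predecessor of `v⁻¹`. -/
def letterLT {V : Type} (lo : LinearOrder V) (l m : V × Bool) : Prop :=
  lo.lt l.1 m.1 ∨ (l.1 = m.1 ∧ l.2 = true ∧ m.2 = false)

/-- `w` is the CGW-normal form `σ(g)` of `g`: the lexicographically largest
reduced word representing `g`. -/
def NormalForm {V : Type} (Γ : SimpleGraph V) (lo : LinearOrder V)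
    (w : List (V × Bool)) (g : RAAG Γ) : Prop :=
  evalWord Γ w = g ∧ w.length = wlen Γ g ∧
    ∀ w' : List (V × Bool), evalWord Γ w' = g → w'.length = wlen Γ g →
      w' = w ∨ List.Lex (letterLT lo) w' w


namespace Raag
open List

variable {V : Type} (Γ : SimpleGraph V)

abbrev Ltr (V : Type) := V × Bool

/-- interior-letter condition: `x` commutes with (and differs from) `v` -/
def Pred (v : V) (x : Ltr V) : Prop := x.1 ≠ v ∧ ¬ Γ.Adj x.1 v

theorem evalWord_nil : evalWord Γ ([] : List (Ltr V)) = 1 := rfl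

theorem evalWord_cons (l : Ltr V) (t : List (Ltr V)) :
    evalWord Γ (l :: t) = raagLetter Γ l * evalWord Γ t := by
  simp [evalWord]

theorem evalWord_append (a b : List (Ltr V)) :
    evalWord Γ (a ++ b) = evalWord Γ a * evalWord Γ b := by
  simp [evalWord]

theorem raag_gen_commute {u v : V} (h1 : u ≠ v) (h2 : ¬ Γ.Adj u v) :
    Commute (raagGen Γ u) (raagGen Γ v) := by
  have hr : (FreeGroup.of u * FreeGroup.of v * (FreeGroup.of u)⁻¹ * (FreeGroup.of v)⁻¹ :
      FreeGroup V) ∈ raagRels Γ := ⟨u, v, h1, h2, rfl⟩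
  have h1' : (QuotientGroup.mk (FreeGroup.of u * FreeGroup.of v * (FreeGroup.of u)⁻¹ *
      (FreeGroup.of v)⁻¹) : RAAG Γ) = 1 :=
    (QuotientGroup.eq_one_iff _).2 (Subgroup.subset_normalClosure hr)
  have hthis : raagGen Γ u * raagGen Γ v * (raagGen Γ u)⁻¹ * (raagGen Γ v)⁻¹ = 1 := by
    exact h1'
  unfold Commute SemiconjBy
  have h2 : raagGen Γ u * raagGen Γ v =
      (raagGen Γ u * raagGen Γ v * (raagGen Γ u)⁻¹ * (raagGen Γ v)⁻¹) *
        (raagGen Γ v * raagGen Γ u) := by group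
  rw [h2, hthis, one_mul]

theorem letter_commute {u v : V} (h1 : u ≠ v) (h2 : ¬ Γ.Adj u v) (a b : Bool) :
    Commute (raagLetter Γ (u, a)) (raagLetter Γ (v, b)) := by
  have h := raag_gen_commute Γ h1 h2
  cases a <;> cases b <;> simp [raagLetter] <;>
    first
      | exact h
      | exact h.inv_left
      | exact h.inv_right
      | exact h.inv_left.inv_right
      | exact h.inv_inv

theorem pred_commute {v : V} {x : Ltr V} (h : Pred Γ v x) (b : Bool) :
    Commute (raagLetter Γ (v, b)) (raagLetter Γ x) := by
  obtain ⟨x1, x2⟩ := x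
  exact (letter_commute Γ h.1 h.2 x2 b).symm

theorem commute_evalWord {v : V} {c : List (Ltr V)} (hc : ∀ x ∈ c, Pred Γ v x) (b : Bool) :
    Commute (raagLetter Γ (v, b)) (evalWord Γ c) := by
  apply Commute.list_prod_right
  intro x hx
  obtain ⟨y, hy, rfl⟩ := List.mem_map.mp hx
  exact pred_commute Γ (hc y hy) b

theorem letter_mul_letter_not (v : V) (b : Bool) :
    raagLetter Γ (v, b) * raagLetter Γ (v, !b) = 1 := by
  cases b <;> simp [raagLetter]

theorem cancel_eval {v : V} {c : List (Ltr V)} (hc : ∀ x ∈ c, Pred Γ v x)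
    (a d : List (Ltr V)) (b : Bool) :
    evalWord Γ (a ++ (v, b) :: c ++ (v, !b) :: d) = evalWord Γ (a ++ (c ++ d)) := by
  have h1 := commute_evalWord Γ hc b
  simp only [evalWord_append, evalWord_cons, ← mul_assoc]
  rw [mul_assoc (evalWord Γ a), h1.eq, ← mul_assoc,
    mul_assoc (evalWord Γ a * evalWord Γ c), letter_mul_letter_not, mul_one]

end Raag

namespace Raag
open List
variable {V : Type} (Γ : SimpleGraph V)

theorem exists_word (g : RAAG Γ) : ∃ w : List (Ltr V), evalWord Γ w = g := by
  refine QuotientGroup.induction_on g ?_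
  intro z
  refine FreeGroup.induction_on z ?_ ?_ ?_ ?_
  · exact ⟨[], rfl⟩
  · intro x
    refine ⟨[(x, true)], ?_⟩
    rfl
  · intro x _
    refine ⟨[(x, false)], ?_⟩
    show raagLetter Γ (x, false) * 1 = _
    rw [mul_one]
    show (QuotientGroup.mk (FreeGroup.of x) : RAAG Γ)⁻¹ = _
    rw [← QuotientGroup.mk_inv]
  · rintro x y ⟨wx, hx⟩ ⟨wy, hy⟩
    exact ⟨wx ++ wy, by rw [evalWord_append, hx, hy, QuotientGroup.mk_mul]; rfl⟩

theorem wlen_le {w : List (Ltr V)} {g : RAAG Γ} (h : evalWord Γ w = g) :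
    wlen Γ g ≤ w.length := Nat.sInf_le ⟨w, h, rfl⟩

theorem wlen_spec (g : RAAG Γ) :
    ∃ w : List (Ltr V), evalWord Γ w = g ∧ w.length = wlen Γ g := by
  obtain ⟨w, hw⟩ := exists_word Γ g
  exact Nat.sInf_mem (s := {n | ∃ w : List (Ltr V), evalWord Γ w = g ∧ w.length = n})
    ⟨w.length, w, hw, rfl⟩

theorem wlen_one : wlen Γ (1 : RAAG Γ) = 0 :=
  Nat.le_zero.mp (wlen_le Γ (evalWord_nil Γ))

theorem wlen_mul_le (g h : RAAG Γ) : wlen Γ (g * h) ≤ wlen Γ g + wlen Γ h := by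
  obtain ⟨a, ha, hla⟩ := wlen_spec Γ g
  obtain ⟨b, hb, hlb⟩ := wlen_spec Γ h
  have := wlen_le Γ (show evalWord Γ (a ++ b) = g * h by rw [evalWord_append, ha, hb])
  simpa [hla, hlb] using this

/-- a word with a cancellation pair -/
def HasCancel (w : List (Ltr V)) : Prop :=
  ∃ (v : V) (b : Bool) (a c d : List (Ltr V)),
    (∀ x ∈ c, Pred Γ v x) ∧ w = a ++ (v, b) :: c ++ (v, !b) :: d

theorem hasCancel_wlen {w : List (Ltr V)} (h : HasCancel Γ w) :
    wlen Γ (evalWord Γ w) + 2 ≤ w.length := by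
  obtain ⟨v, b, a, c, d, hc, rfl⟩ := h
  have he := cancel_eval Γ hc a d b
  have := wlen_le Γ he.symm
  simp only [length_append, length_cons] at this ⊢
  omega

end Raag
namespace Raag
open List
variable {V : Type} (Γ : SimpleGraph V)

open Classical in
/-- try to cancel the letter `(v,b)` against a prefix of commuting letters -/
noncomputable def tryCancel (v : V) (b : Bool) : List (Ltr V) → Option (List (Ltr V))
  | [] => none
  | x :: t =>
      if x = (v, b) then some t
      else if Pred Γ v x then (tryCancel v b t).map (x :: ·) else none

theorem tryCancel_some_iff {v : V} {b : Bool} {w u : List (Ltr V)} :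
    tryCancel Γ v b w = some u ↔
      ∃ c d : List (Ltr V), (∀ x ∈ c, Pred Γ v x) ∧ w = c ++ (v, b) :: d ∧ u = c ++ d := by
  classical
  induction w generalizing u with
  | nil =>
    simp only [tryCancel]
    constructor
    · intro h; cases h
    · rintro ⟨c, d, _, h, _⟩; exact absurd h (by simp)
  | cons x t ih =>
    simp only [tryCancel]
    by_cases hx : x = (v, b)
    · simp only [hx, if_pos rfl]
      constructor
      · rintro h
        injection h with h
        exact ⟨[], t, by simp, by simp, by simp [h.symm]⟩
      · rintro ⟨c, d, hc, hw, hu⟩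
        rcases c with _ | ⟨y, c'⟩
        · simp at hw
          simp [hu, hw]
        · exfalso
          simp only [cons_append, List.cons.injEq] at hw
          have := hc y (by simp)
          rw [← hw.1] at this
          exact this.1 rfl
    · rw [if_neg hx]
      by_cases hp : Pred Γ v x
      · rw [if_pos hp]
        constructor
        · intro h
          obtain ⟨u', hu', rfl⟩ := Option.map_eq_some_iff.mp h
          obtain ⟨c, d, hc, ht, hu⟩ := (ih).mp hu'
          exact ⟨x :: c, d, by
            intro y hy
            rcases List.mem_cons.mp hy with rfl | hy
            · exact hp
            · exact hc y hy, by simp [ht], by simp [hu]⟩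
        · rintro ⟨c, d, hc, hw, hu⟩
          rcases c with _ | ⟨y, c'⟩
          · simp only [nil_append, List.cons.injEq] at hw
            exact absurd hw.1 hx
          · simp only [cons_append, List.cons.injEq] at hw
            obtain ⟨rfl, ht⟩ := hw
            have : tryCancel Γ v b t = some (c' ++ d) :=
              (ih).mpr ⟨c', d, fun z hz => hc z (by simp [hz]), ht, rfl⟩
            rw [this]
            simp [hu]
      · rw [if_neg hp]
        constructor
        · intro h; cases h
        · rintro ⟨c, d, hc, hw, hu⟩
          rcases c with _ | ⟨y, c'⟩
          · simp only [nil_append, List.cons.injEq] at hw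
            exact absurd hw.1 hx
          · simp only [cons_append, List.cons.injEq] at hw
            exact absurd (hw.1 ▸ hc y (by simp)) hp

theorem tryCancel_none_iff {v : V} {b : Bool} {w : List (Ltr V)} :
    tryCancel Γ v b w = none ↔
      ¬ ∃ c d : List (Ltr V), (∀ x ∈ c, Pred Γ v x) ∧ w = c ++ (v, b) :: d := by
  constructor
  · rintro h ⟨c, d, hc, hw⟩
    have : tryCancel Γ v b w = some (c ++ d) := (tryCancel_some_iff Γ).mpr ⟨c, d, hc, hw, rfl⟩
    rw [h] at this; cases this
  · intro h
    cases he : tryCancel Γ v b w with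
    | none => rfl
    | some u =>
      obtain ⟨c, d, hc, hw, _⟩ := (tryCancel_some_iff Γ).mp he
      exact absurd ⟨c, d, hc, hw⟩ h

/-- prepend a letter, cancelling if possible -/
noncomputable def push (l : Ltr V) (w : List (Ltr V)) : List (Ltr V) :=
  (tryCancel Γ l.1 (!l.2) w).getD (l :: w)

theorem push_eval (l : Ltr V) (w : List (Ltr V)) :
    evalWord Γ (push Γ l w) = raagLetter Γ l * evalWord Γ w := by
  obtain ⟨v, b⟩ := l
  show evalWord Γ ((tryCancel Γ v (!b) w).getD ((v, b) :: w)) = _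
  cases he : tryCancel Γ v (!b) w with
  | none => simp [evalWord_cons]
  | some u =>
    obtain ⟨c, d, hc, hw, hu⟩ := (tryCancel_some_iff Γ).mp he
    have key := cancel_eval Γ hc [] d b
    simp only [nil_append] at key
    simp only [Option.getD_some, hu, hw]
    rw [← key]
    exact evalWord_cons Γ (v, b) (c ++ (v, !b) :: d)

theorem push_length (l : Ltr V) (w : List (Ltr V)) :
    (push Γ l w).length ≤ w.length + 1 := by
  unfold push
  cases he : tryCancel Γ l.1 (!l.2) w with
  | none => simp
  | some u =>
    obtain ⟨c, d, hc, hw, hu⟩ := (tryCancel_some_iff Γ).mp he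
    simp [hu, hw]
    omega

end Raag
namespace Raag
open List
variable {V : Type} (Γ : SimpleGraph V)

theorem noCancel_nil : ¬ HasCancel Γ ([] : List (Ltr V)) := by
  rintro ⟨v, b, a, c, d, _, h⟩
  have := congrArg List.length h
  simp at this

theorem pred_symm {v : V} {x : Ltr V} (h : Pred Γ v x) (e : Bool) : Pred Γ x.1 (v, e) :=
  ⟨fun hh => h.1 hh.symm, fun hh => h.2 hh.symm⟩

theorem append_eq_append_cases {α : Type*} (p q r s : List α) (h : p ++ q = r ++ s) :
    (∃ k, r = p ++ k ∧ q = k ++ s) ∨ (∃ k, p = r ++ k ∧ s = k ++ q) :=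
  List.append_eq_append_iff.mp h

theorem noCancel_push {w : List (Ltr V)} (hw : ¬ HasCancel Γ w) (l : Ltr V) :
    ¬ HasCancel Γ (push Γ l w) := by
  obtain ⟨v, b⟩ := l
  show ¬ HasCancel Γ ((tryCancel Γ v (!b) w).getD ((v, b) :: w))
  cases he : tryCancel Γ v (!b) w with
  | none =>
    simp only [Option.getD_none]
    rintro ⟨x, e, a, c, d, hc, hdec⟩
    rcases a with _ | ⟨z, a'⟩
    · rw [nil_append] at hdec
      injection hdec with h1 h2
      injection h1 with hx hb
      subst hx hb
      rw [tryCancel_none_iff] at he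
      exact he ⟨c, d, hc, h2⟩
    · injection hdec with h1 h2
      exact hw ⟨x, e, a', c, d, hc, h2⟩
  | some u =>
    simp only [Option.getD_some]
    obtain ⟨c, d, hc0, hw0, hu⟩ := (tryCancel_some_iff Γ).mp he
    subst hu hw0
    rintro ⟨x, e, a, c', d', hc', hdec⟩
    rw [List.append_assoc, List.cons_append] at hdec
    rcases append_eq_append_cases c d a ((x, e) :: (c' ++ (x, !e) :: d')) hdec with
      ⟨k, hk1, hk2⟩ | ⟨k, hk1, hk2⟩
    · -- a = c ++ k, d = k ++ R
      refine hw ⟨x, e, c ++ (v, !b) :: k, c', d', hc', ?_⟩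
      rw [hk2]; simp
    · -- c = a ++ k,  R = k ++ d
      rcases k with _ | ⟨k0, k'⟩
      · rw [nil_append] at hk2
        refine hw ⟨x, e, a ++ [(v, !b)], c', d', hc', ?_⟩
        rw [hk1, ← hk2]; simp
      · rw [cons_append] at hk2
        injection hk2 with hk0 hk2
        subst hk0
        have hxe : Pred Γ v (x, e) := hc0 _ (by rw [hk1]; simp)
        have hvb : Pred Γ x (v, !b) := pred_symm Γ hxe (!b)
        rcases append_eq_append_cases c' ((x, !e) :: d') k' d hk2 with
          ⟨m, hm1, hm2⟩ | ⟨m, hm1, hm2⟩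
        · -- k' = c' ++ m, (x,!e) :: d' = m ++ d
          rcases m with _ | ⟨m0, m'⟩
          · rw [nil_append] at hm2
            refine hw ⟨x, e, a, c' ++ [(v, !b)], d', ?_, ?_⟩
            · intro y hy
              rcases List.mem_append.mp hy with hy | hy
              · exact hc' y hy
              · simp only [List.mem_singleton] at hy; subst hy; exact hvb
            · rw [hk1, hm1, ← hm2]; simp
          · rw [cons_append] at hm2
            injection hm2 with hm0 hd
            refine hw ⟨x, e, a, c', m' ++ (v, !b) :: d, hc', ?_⟩
            rw [hk1, hm1, ← hm0]; simp
        · -- c' = k' ++ m, d = m ++ (x,!e) :: d'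
          refine hw ⟨x, e, a, k' ++ (v, !b) :: m, d', ?_, ?_⟩
          · intro y hy
            rcases List.mem_append.mp hy with hy | hy
            · exact hc' y (by rw [hm1]; exact List.mem_append.mpr (Or.inl hy))
            · rcases List.mem_cons.mp hy with rfl | hy
              · exact hvb
              · exact hc' y (by rw [hm1]; exact List.mem_append.mpr (Or.inr hy))
          · rw [hk1, hm2]; simp

theorem push_of_noCancel {t : List (Ltr V)} {l : Ltr V} (h : ¬ HasCancel Γ (l :: t)) :
    push Γ l t = l :: t := by
  obtain ⟨v, b⟩ := l
  show (tryCancel Γ v (!b) t).getD ((v, b) :: t) = (v, b) :: t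
  have hnone : tryCancel Γ v (!b) t = none := by
    rw [tryCancel_none_iff]
    rintro ⟨c, d, hc, ht⟩
    exact h ⟨v, b, [], c, d, hc, by rw [ht]; rfl⟩
  rw [hnone]; rfl

theorem noCancel_tail {t : List (Ltr V)} {l : Ltr V} (h : ¬ HasCancel Γ (l :: t)) :
    ¬ HasCancel Γ t := by
  rintro ⟨v, b, a, c, d, hc, ht⟩
  exact h ⟨v, b, l :: a, c, d, hc, by rw [ht]; rfl⟩

end Raag
namespace Raag
open List
variable {V : Type} (Γ : SimpleGraph V)

/-- a single swap of adjacent commuting letters -/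
inductive Shuf : List (Ltr V) → List (Ltr V) → Prop
  | swap (a : List (Ltr V)) (x y : Ltr V) (d : List (Ltr V))
      (h1 : x.1 ≠ y.1) (h2 : ¬ Γ.Adj x.1 y.1) :
      Shuf (a ++ x :: y :: d) (a ++ y :: x :: d)

/-- shuffle equivalence -/
def SE (w w' : List (Ltr V)) : Prop := Relation.ReflTransGen (Shuf Γ) w w'

theorem Shuf.symm' {w w' : List (Ltr V)} (h : Shuf Γ w w') : Shuf Γ w' w := by
  cases h with
  | swap a x y d h1 h2 =>
    exact Shuf.swap a y x d (fun hh => h1 hh.symm) (fun hh => h2 hh.symm)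

theorem SE.refl' (w : List (Ltr V)) : SE Γ w w := Relation.ReflTransGen.refl

theorem SE.trans' {w1 w2 w3 : List (Ltr V)} (h1 : SE Γ w1 w2) (h2 : SE Γ w2 w3) :
    SE Γ w1 w3 := Relation.ReflTransGen.trans h1 h2

theorem SE.single' {w1 w2 : List (Ltr V)} (h : Shuf Γ w1 w2) : SE Γ w1 w2 :=
  Relation.ReflTransGen.single h

theorem SE.symm' {w1 w2 : List (Ltr V)} (h : SE Γ w1 w2) : SE Γ w2 w1 :=
  by
  induction h with
  | refl => exact SE.refl' Γ _
  | tail _ hs ih => exact SE.trans' Γ (SE.single' Γ (Shuf.symm' Γ hs)) ih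

theorem Shuf.length_eq {w w' : List (Ltr V)} (h : Shuf Γ w w') : w.length = w'.length := by
  cases h; simp

theorem SE.length_eq {w w' : List (Ltr V)} (h : SE Γ w w') : w.length = w'.length := by
  induction h with
  | refl => rfl
  | tail _ h ih => rw [ih, h.length_eq]

theorem Shuf.eval_eq {w w' : List (Ltr V)} (h : Shuf Γ w w') :
    evalWord Γ w = evalWord Γ w' := by
  cases h with
  | swap a x y d h1 h2 =>
    have : Commute (raagLetter Γ x) (raagLetter Γ y) := by
      obtain ⟨x1, x2⟩ := x; obtain ⟨y1, y2⟩ := y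
      exact letter_commute Γ h1 h2 x2 y2
    simp only [evalWord_append, evalWord_cons, ← mul_assoc]
    rw [mul_assoc (evalWord Γ a), this.eq, ← mul_assoc]

theorem SE.eval_eq {w w' : List (Ltr V)} (h : SE Γ w w') :
    evalWord Γ w = evalWord Γ w' := by
  induction h with
  | refl => rfl
  | tail _ h ih => rw [ih, h.eval_eq]

theorem Shuf.cons {w w' : List (Ltr V)} (z : Ltr V) (h : Shuf Γ w w') :
    Shuf Γ (z :: w) (z :: w') := by
  cases h with
  | swap a x y d h1 h2 => exact Shuf.swap (z :: a) x y d h1 h2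

theorem SE.cons {w w' : List (Ltr V)} (z : Ltr V) (h : SE Γ w w') :
    SE Γ (z :: w) (z :: w') := by
  induction h with
  | refl => exact SE.refl' Γ _
  | tail _ h ih => exact SE.trans' Γ ih (SE.single' Γ (h.cons Γ z))

/-- move a commuting letter from the front past `c` -/
theorem SE.bubble {v : V} {c : List (Ltr V)} (hc : ∀ x ∈ c, Pred Γ v x) (b : Bool)
    (d : List (Ltr V)) : SE Γ ((v, b) :: (c ++ d)) (c ++ (v, b) :: d) := by
  induction c with
  | nil => exact SE.refl' Γ _
  | cons y c' ih =>
    have hy := hc y (by simp)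
    have step : Shuf Γ ((v, b) :: y :: (c' ++ d)) (y :: (v, b) :: (c' ++ d)) := by
      have := Shuf.swap ([] : List (Ltr V)) (v, b) y (c' ++ d)
        (fun hh => hy.1 hh.symm) (fun hh => hy.2 hh.symm)
      simpa using this
    refine SE.trans' Γ (SE.single' Γ step) ?_
    have := (ih (fun x hx => hc x (by simp [hx]))).cons Γ y
    simpa using this

end Raag
namespace Raag
open List
variable {V : Type} (Γ : SimpleGraph V)

theorem push_def (v : V) (b : Bool) (w : List (Ltr V)) :
    push Γ (v, b) w = (tryCancel Γ v (!b) w).getD ((v, b) :: w) := rfl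

theorem tryCancel_swap_some {v : V} {b : Bool} {a d : List (Ltr V)} {x y : Ltr V}
    (h1 : x.1 ≠ y.1) (h2 : ¬ Γ.Adj x.1 y.1) {u : List (Ltr V)}
    (h : tryCancel Γ v b (a ++ x :: y :: d) = some u) :
    ∃ u', tryCancel Γ v b (a ++ y :: x :: d) = some u' ∧ (u = u' ∨ Shuf Γ u u') := by
  obtain ⟨c, e, hc, hw, hu⟩ := (tryCancel_some_iff Γ).mp h
  have hysym : ∀ hx : x = (v, b), Pred Γ v y := fun hx =>
    ⟨fun hh => h1 (by rw [hx, hh]), fun hh => h2 (by rw [hx]; exact hh.symm)⟩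
  have hxsym : ∀ hy : y = (v, b), Pred Γ v x := fun hy =>
    ⟨fun hh => h1 (by rw [hy, hh]), fun hh => h2 (by rw [hy]; exact hh)⟩
  rcases append_eq_append_cases a (x :: y :: d) c ((v, b) :: e) hw with
    ⟨k, hk1, hk2⟩ | ⟨k, hk1, hk2⟩
  · -- c = a ++ k, x :: y :: d = k ++ (v,b) :: e
    rcases k with _ | ⟨k0, k'⟩
    · -- k = [] : x = (v,b), e = y :: d, c = a
      rw [nil_append] at hk2
      injection hk2 with hx he
      rw [append_nil] at hk1
      subst hk1
      refine ⟨c ++ (y :: d), (tryCancel_some_iff Γ).mpr ⟨c ++ [y], d, ?_, ?_, by simp⟩, ?_⟩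
      · intro z hz
        rcases List.mem_append.mp hz with hz | hz
        · exact hc z hz
        · simp only [List.mem_singleton] at hz; subst hz; exact hysym hx
      · rw [hx]; simp
      · left; rw [hu, ← he]
    · rcases k' with _ | ⟨k1, k''⟩
      · -- k = [k0] : x = k0, y = (v,b), d = e, c = a ++ [x]
        injection hk2 with hx hk2
        injection hk2 with hy he
        subst hx
        refine ⟨(a ++ [x]) ++ d, (tryCancel_some_iff Γ).mpr
          ⟨a, x :: d, fun z hz => hc z (by rw [hk1]; simp [hz]), ?_, by simp⟩, ?_⟩
        · rw [hy]
        · left; rw [hu, hk1, ← he]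
      · -- k = x :: y :: k'' : d = k'' ++ (v,b) :: e, c = a ++ x :: y :: k''
        injection hk2 with hx hk2
        injection hk2 with hy hk2
        subst hx hy
        have hpred : ∀ z ∈ a ++ y :: x :: k'', Pred Γ v z := by
          intro z hz
          apply hc
          rw [hk1]
          simp only [List.mem_append, List.mem_cons] at hz ⊢
          tauto
        refine ⟨a ++ y :: x :: (k'' ++ e), (tryCancel_some_iff Γ).mpr
          ⟨a ++ y :: x :: k'', e, hpred, by rw [hk2]; simp, by simp⟩, ?_⟩
        right
        rw [hu, hk1]
        have h3 : (a ++ x :: y :: k'') ++ e = a ++ x :: y :: (k'' ++ e) := by simp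
        have h4 : a ++ y :: x :: (k'' ++ e) = a ++ y :: x :: (k'' ++ e) := rfl
        rw [h3]
        have h5 : a ++ y :: x :: (k'' ++ e) = a ++ y :: x :: (k''.append e) := by simp
        exact (by simpa using Shuf.swap a x y (k'' ++ e) h1 h2 :
          Shuf Γ (a ++ x :: y :: (k'' ++ e)) (a ++ y :: x :: (k'' ++ e)))
  · -- a = c ++ k, (v,b) :: e = k ++ (x :: y :: d)
    rcases k with _ | ⟨k0, k'⟩
    · -- k = [] : a = c, x = (v,b), e = y :: d
      rw [append_nil] at hk1
      rw [nil_append] at hk2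
      injection hk2.symm with hx he
      subst hk1
      refine ⟨a ++ (y :: d), (tryCancel_some_iff Γ).mpr ⟨a ++ [y], d, ?_, ?_, by simp⟩, ?_⟩
      · intro z hz
        rcases List.mem_append.mp hz with hz | hz
        · exact hc z hz
        · simp only [List.mem_singleton] at hz; subst hz; exact hysym hx
      · rw [hx]; simp
      · left; rw [hu, he]
    · -- k = (v,b) :: k' : a = c ++ (v,b) :: k', e = k' ++ x :: y :: d
      injection hk2 with hk0 he
      subst hk0
      refine ⟨c ++ (k' ++ y :: x :: d), (tryCancel_some_iff Γ).mpr
        ⟨c, k' ++ y :: x :: d, hc, by rw [hk1]; simp, rfl⟩, ?_⟩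
      right
      rw [hu, he]
      have h3 : c ++ (k'.append (x :: y :: d)) = (c ++ k') ++ x :: y :: d := by simp
      have h4 : c ++ (k' ++ y :: x :: d) = (c ++ k') ++ y :: x :: d := by simp
      rw [h3, h4]
      exact Shuf.swap (c ++ k') x y d h1 h2

theorem tryCancel_swap_none {v : V} {b : Bool} {a d : List (Ltr V)} {x y : Ltr V}
    (h1 : x.1 ≠ y.1) (h2 : ¬ Γ.Adj x.1 y.1)
    (h : tryCancel Γ v b (a ++ x :: y :: d) = none) :
    tryCancel Γ v b (a ++ y :: x :: d) = none := by
  cases he : tryCancel Γ v b (a ++ y :: x :: d) with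
  | none => rfl
  | some u =>
    obtain ⟨u', hu', _⟩ := tryCancel_swap_some Γ (fun hh => h1 hh.symm)
      (fun hh => h2 hh.symm) he
    rw [h] at hu'
    cases hu'

theorem push_swap (l : Ltr V) {a d : List (Ltr V)} {x y : Ltr V}
    (h1 : x.1 ≠ y.1) (h2 : ¬ Γ.Adj x.1 y.1) :
    SE Γ (push Γ l (a ++ x :: y :: d)) (push Γ l (a ++ y :: x :: d)) := by
  obtain ⟨v, b⟩ := l
  rw [push_def Γ, push_def Γ]
  cases he : tryCancel Γ v (!b) (a ++ x :: y :: d) with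
  | none =>
    rw [tryCancel_swap_none Γ h1 h2 he]
    simp only [Option.getD_none]
    exact SE.single' Γ (Shuf.swap ((v, b) :: a) x y d h1 h2)
  | some u =>
    obtain ⟨u', hu', hrel⟩ := tryCancel_swap_some Γ h1 h2 he
    rw [hu']
    simp only [Option.getD_some]
    rcases hrel with rfl | hrel
    · exact SE.refl' Γ _
    · exact SE.single' Γ hrel

theorem push_SE {w w' : List (Ltr V)} (h : SE Γ w w') (l : Ltr V) :
    SE Γ (push Γ l w) (push Γ l w') := by
  induction h with
  | refl => exact SE.refl' Γ _
  | tail _ hstep ih =>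
    refine SE.trans' Γ ih ?_
    cases hstep with
    | swap a x y d h1 h2 => exact push_swap Γ l h1 h2

theorem push_push_inv {w : List (Ltr V)} (hw : ¬ HasCancel Γ w) (v : V) (b : Bool) :
    SE Γ (push Γ (v, b) (push Γ (v, !b) w)) w := by
  have hbb : (!(!b)) = b := Bool.not_not b
  rw [push_def Γ v (!b), hbb]
  cases he : tryCancel Γ v b w with
  | none =>
    simp only [Option.getD_none]
    rw [push_def Γ]
    have : tryCancel Γ v (!b) ((v, !b) :: w) = some w :=
      (tryCancel_some_iff Γ).mpr ⟨[], w, by simp, by simp, by simp⟩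
    rw [this]
    exact SE.refl' Γ _
  | some u =>
    simp only [Option.getD_some]
    obtain ⟨c, d, hc, hwd, hu⟩ := (tryCancel_some_iff Γ).mp he
    have hnone : tryCancel Γ v (!b) u = none := by
      rw [tryCancel_none_iff]
      rintro ⟨c', d', hc', hu'⟩
      rw [hu] at hu'
      rcases append_eq_append_cases c d c' ((v, !b) :: d') hu' with
        ⟨k, hk1, hk2⟩ | ⟨k, hk1, hk2⟩
      · -- c' = c ++ k, d = k ++ (v,!b) :: d'
        refine hw ⟨v, b, c, k, d', ?_, ?_⟩
        · intro z hz; exact hc' z (by rw [hk1]; simp [hz])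
        · rw [hwd, hk2]; simp
      · -- c = c' ++ k, (v,!b) :: d' = k ++ d
        rcases k with _ | ⟨k0, k'⟩
        · rw [nil_append] at hk2
          refine hw ⟨v, b, c, [], d', by simp, ?_⟩
          rw [hwd, ← hk2]; simp
        · injection hk2 with hk0 _
          have : k0 ∈ c := by rw [hk1]; simp
          exact (hc k0 this).1 (by rw [← hk0])
    rw [push_def Γ, hnone]
    simp only [Option.getD_none]
    rw [hu, hwd]
    exact SE.bubble Γ hc b d

/-- pushes of letters with distinct commuting generators commute up to shuffle -/
theorem push_push_comm_aux {u v : V} (hne : u ≠ v) (hadj : ¬ Γ.Adj u v) (a b : Bool)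
    {w c d : List (Ltr V)} (hc : ∀ z ∈ c, Pred Γ u z) (hwd : w = c ++ (u, !a) :: d)
    (hnv : tryCancel Γ v (!b) w = none) :
    push Γ (u, a) (push Γ (v, b) w) = (v, b) :: (c ++ d) ∧
      push Γ (v, b) (push Γ (u, a) w) = (v, b) :: (c ++ d) := by
  have hsome : tryCancel Γ u (!a) w = some (c ++ d) :=
    (tryCancel_some_iff Γ).mpr ⟨c, d, hc, hwd, rfl⟩
  have hpuv : Pred Γ v (u, !a) := ⟨hne, hadj⟩
  have hpvu : Pred Γ u (v, b) := ⟨fun hh => hne hh.symm, fun hh => hadj hh.symm⟩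
  constructor
  · -- push (u,a) (push (v,b) w) : inner prepends, outer cancels
    rw [push_def Γ v b, hnv]
    simp only [Option.getD_none]
    rw [push_def Γ]
    have : tryCancel Γ u (!a) ((v, b) :: w) = some ((v, b) :: (c ++ d)) := by
      refine (tryCancel_some_iff Γ).mpr ⟨(v, b) :: c, d, ?_, by rw [hwd]; rfl, rfl⟩
      intro z hz
      rcases List.mem_cons.mp hz with rfl | hz
      · exact hpvu
      · exact hc z hz
    rw [this]
    rfl
  · -- push (v,b) (push (u,a) w) : inner cancels, outer prepends
    rw [push_def Γ u a, hsome]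
    simp only [Option.getD_some]
    rw [push_def Γ]
    have hnone2 : tryCancel Γ v (!b) (c ++ d) = none := by
      rw [tryCancel_none_iff]
      rintro ⟨c', d', hc', hu'⟩
      rw [tryCancel_none_iff] at hnv
      rcases append_eq_append_cases c d c' ((v, !b) :: d') hu' with
        ⟨k, hk1, hk2⟩ | ⟨k, hk1, hk2⟩
      · -- c' = c ++ k, d = k ++ (v,!b) :: d'
        refine hnv ⟨c ++ (u, !a) :: k, d', ?_, ?_⟩
        · intro z hz
          simp only [List.mem_append, List.mem_cons] at hz
          rcases hz with hz | rfl | hz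
          · exact hc' z (by rw [hk1]; simp [hz])
          · exact hpuv
          · exact hc' z (by rw [hk1]; simp [hz])
        · rw [hwd, hk2]; simp
      · -- c = c' ++ k, (v,!b) :: d' = k ++ d
        rcases k with _ | ⟨k0, k'⟩
        · rw [nil_append] at hk2
          refine hnv ⟨c ++ [(u, !a)], d', ?_, ?_⟩
          · intro z hz
            rcases List.mem_append.mp hz with hz | hz
            · exact hc' z (by rw [hk1] at hz; simpa using hz)
            · simp only [List.mem_singleton] at hz; subst hz; exact hpuv
          · rw [hwd, ← hk2]; simp
        · injection hk2 with hk0 hk2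
          refine hnv ⟨c', k' ++ (u, !a) :: d, ?_, ?_⟩
          · exact hc'
          · rw [hwd, hk1, ← hk0]; simp
    rw [hnone2]
    rfl

theorem push_push_comm {u v : V} (hne : u ≠ v) (hadj : ¬ Γ.Adj u v) (a b : Bool)
    (w : List (Ltr V)) :
    SE Γ (push Γ (u, a) (push Γ (v, b) w)) (push Γ (v, b) (push Γ (u, a) w)) := by
  have hpuv : Pred Γ v (u, !a) := ⟨hne, hadj⟩
  have hpvu : Pred Γ u (v, !b) := ⟨fun hh => hne hh.symm, fun hh => hadj hh.symm⟩
  cases heu : tryCancel Γ u (!a) w with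
  | none =>
    cases hev : tryCancel Γ v (!b) w with
    | none =>
      -- both prepend
      have h1 : push Γ (v, b) w = (v, b) :: w := by rw [push_def Γ, hev]; rfl
      have h2 : push Γ (u, a) w = (u, a) :: w := by rw [push_def Γ, heu]; rfl
      rw [h1, h2]
      have h3 : tryCancel Γ u (!a) ((v, b) :: w) = none := by
        rw [tryCancel_none_iff]
        rintro ⟨c, d, hc, hd⟩
        rcases c with _ | ⟨c0, ct⟩
        · rw [nil_append] at hd
          injection hd with hd1 _
          injection hd1 with hd1 _
          exact hne hd1.symm
        · injection hd with _ hd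
          rw [tryCancel_none_iff] at heu
          exact heu ⟨ct, d, fun z hz => hc z (by simp [hz]), hd⟩
      have h4 : tryCancel Γ v (!b) ((u, a) :: w) = none := by
        rw [tryCancel_none_iff]
        rintro ⟨c, d, hc, hd⟩
        rcases c with _ | ⟨c0, ct⟩
        · rw [nil_append] at hd
          injection hd with hd1 _
          injection hd1 with hd1 _
          exact hne hd1
        · injection hd with _ hd
          rw [tryCancel_none_iff] at hev
          exact hev ⟨ct, d, fun z hz => hc z (by simp [hz]), hd⟩
      rw [push_def Γ, h3, push_def Γ, h4]
      simp only [Option.getD_none]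
      exact SE.single' Γ (Shuf.swap ([] : List (Ltr V)) (u, a) (v, b) w hne hadj)
    | some u2 =>
      -- v-cancel only
      obtain ⟨c, d, hc, hwd, hu2⟩ := (tryCancel_some_iff Γ).mp hev
      obtain ⟨hA, hB⟩ := push_push_comm_aux Γ (fun hh => hne hh.symm)
        (fun hh => hadj hh.symm) b a hc hwd heu
      rw [hA, hB]
      exact SE.refl' Γ _
  | some u1 =>
    obtain ⟨c1, d1, hc1, hwd1, hu1⟩ := (tryCancel_some_iff Γ).mp heu
    cases hev : tryCancel Γ v (!b) w with
    | none =>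
      obtain ⟨hA, hB⟩ := push_push_comm_aux Γ hne hadj a b hc1 hwd1 hev
      rw [hA, hB]
      exact SE.refl' Γ _
    | some u2 =>
      -- both cancel
      obtain ⟨c2, d2, hc2, hwd2, hu2⟩ := (tryCancel_some_iff Γ).mp hev
      have hin1 : push Γ (v, b) w = u2 := by rw [push_def Γ, hev]; rfl
      have hin2 : push Γ (u, a) w = u1 := by rw [push_def Γ, heu]; rfl
      rw [hin1, hin2]
      -- compare the two decompositions
      rcases append_eq_append_cases c1 ((u, !a) :: d1) c2 ((v, !b) :: d2)
        (hwd1 ▸ hwd2) with ⟨k, hk1, hk2⟩ | ⟨k, hk1, hk2⟩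
      · -- c2 = c1 ++ k, (u,!a) :: d1 = k ++ (v,!b) :: d2
        rcases k with _ | ⟨k0, k'⟩
        · rw [nil_append] at hk2
          injection hk2 with hk2 _
          injection hk2 with hk2 _
          exact absurd hk2 hne
        · injection hk2 with hk0 hk2
          -- k0 = (u,!a), d1 = k' ++ (v,!b) :: d2
          have hres1 : tryCancel Γ v (!b) u1 = some ((c1 ++ k') ++ d2) := by
            refine (tryCancel_some_iff Γ).mpr ⟨c1 ++ k', d2, ?_, ?_, rfl⟩
            · intro z hz
              rcases List.mem_append.mp hz with hz | hz
              · exact hc2 z (by rw [hk1]; simp [hz])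
              · exact hc2 z (by rw [hk1, ← hk0]; simp [hz])
            · rw [hu1, hk2]; simp
          have hres2 : tryCancel Γ u (!a) u2 = some (c1 ++ (k' ++ d2)) := by
            refine (tryCancel_some_iff Γ).mpr ⟨c1, k' ++ d2, hc1, ?_, rfl⟩
            rw [hu2, hk1, ← hk0]; simp
          rw [push_def Γ, push_def Γ, hres1, hres2]
          simp only [Option.getD_some]
          have : (c1 ++ k') ++ d2 = c1 ++ (k' ++ d2) := by simp
          rw [this]
          exact SE.refl' Γ _
      · -- c1 = c2 ++ k, (v,!b) :: d2 = k ++ (u,!a) :: d1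
        rcases k with _ | ⟨k0, k'⟩
        · rw [nil_append] at hk2
          injection hk2 with hk2 _
          injection hk2 with hk2 _
          exact absurd hk2.symm hne
        · injection hk2 with hk0 hk2
          -- k0 = (v,!b), d2 = k' ++ (u,!a) :: d1
          have hres1 : tryCancel Γ v (!b) u1 = some (c2 ++ (k' ++ d1)) := by
            refine (tryCancel_some_iff Γ).mpr ⟨c2, k' ++ d1, hc2, ?_, rfl⟩
            rw [hu1, hk1, ← hk0]; simp
          have hres2 : tryCancel Γ u (!a) u2 = some ((c2 ++ k') ++ d1) := by
            refine (tryCancel_some_iff Γ).mpr ⟨c2 ++ k', d1, ?_, ?_, rfl⟩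
            · intro z hz
              rcases List.mem_append.mp hz with hz | hz
              · exact hc1 z (by rw [hk1]; simp [hz])
              · exact hc1 z (by rw [hk1, ← hk0]; simp [hz])
            · rw [hu2, hk2]; simp
          rw [push_def Γ, push_def Γ, hres1, hres2]
          simp only [Option.getD_some]
          have : (c2 ++ k') ++ d1 = c2 ++ (k' ++ d1) := by simp
          rw [this]
          exact SE.refl' Γ _

end Raag
namespace Raag
open List
variable {V : Type} (Γ : SimpleGraph V)

/-- reduced words -/
def Red := {w : List (Ltr V) // ¬ HasCancel Γ w}

instance redSetoid : Setoid (Red Γ) where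
  r u v := SE Γ u.1 v.1
  iseqv := ⟨fun u => SE.refl' Γ u.1, fun h => SE.symm' Γ h, fun h1 h2 => SE.trans' Γ h1 h2⟩

/-- reduced words modulo shuffles -/
def RS := Quotient (redSetoid Γ)

noncomputable def pushP (l : Ltr V) (u : Red Γ) : Red Γ :=
  ⟨push Γ l u.1, noCancel_push Γ u.2 l⟩

noncomputable def pushQ (l : Ltr V) : RS Γ → RS Γ :=
  Quotient.map (pushP Γ l) (fun _ _ h => push_SE Γ h l)

noncomputable def permOf (v : V) : Equiv.Perm (RS Γ) where
  toFun := pushQ Γ (v, true)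
  invFun := pushQ Γ (v, false)
  left_inv := by
    intro q
    refine Quotient.inductionOn q ?_
    intro u
    show Quotient.mk _ (pushP Γ (v, false) (pushP Γ (v, true) u)) = Quotient.mk _ u
    exact Quotient.sound (push_push_inv Γ u.2 v false)
  right_inv := by
    intro q
    refine Quotient.inductionOn q ?_
    intro u
    show Quotient.mk _ (pushP Γ (v, true) (pushP Γ (v, false) u)) = Quotient.mk _ u
    exact Quotient.sound (push_push_inv Γ u.2 v true)

theorem rels_lift_trivial :
    ∀ r ∈ raagRels Γ, FreeGroup.lift (fun v => permOf Γ v) r = 1 := by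
  rintro r ⟨u, v, hne, hadj, rfl⟩
  simp only [map_mul, map_inv, FreeGroup.lift_apply_of]
  have hcomm : permOf Γ u * permOf Γ v = permOf Γ v * permOf Γ u := by
    ext q
    refine Quotient.inductionOn q ?_
    intro w
    show pushQ Γ (u, true) (pushQ Γ (v, true) (Quotient.mk _ w)) =
      pushQ Γ (v, true) (pushQ Γ (u, true) (Quotient.mk _ w))
    show Quotient.mk _ (pushP Γ (u, true) (pushP Γ (v, true) w)) =
      Quotient.mk _ (pushP Γ (v, true) (pushP Γ (u, true) w))
    exact Quotient.sound (push_push_comm Γ hne hadj true true w.1)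
  rw [hcomm]
  group

noncomputable def Phi : RAAG Γ →* Equiv.Perm (RS Γ) :=
  PresentedGroup.toGroup (rels_lift_trivial Γ)

theorem Phi_letter (l : Ltr V) (q : RS Γ) :
    Phi Γ (raagLetter Γ l) q = pushQ Γ l q := by
  obtain ⟨v, b⟩ := l
  cases b with
  | true =>
    have : raagLetter Γ (v, true) = PresentedGroup.of v := rfl
    rw [this]
    rw [show Phi Γ (PresentedGroup.of v) = permOf Γ v from PresentedGroup.toGroup.of _]
    rfl
  | false =>
    have : raagLetter Γ (v, false) = (PresentedGroup.of v : RAAG Γ)⁻¹ := rfl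
    rw [this, map_inv]
    rw [show Phi Γ (PresentedGroup.of v) = permOf Γ v from PresentedGroup.toGroup.of _]
    rfl

theorem Phi_eval (w : List (Ltr V)) (q : RS Γ) :
    Phi Γ (evalWord Γ w) q = w.foldr (fun l acc => pushQ Γ l acc) q := by
  induction w generalizing q with
  | nil => rw [evalWord_nil, map_one]; rfl
  | cons l t ih =>
    rw [evalWord_cons, map_mul]
    show Phi Γ (raagLetter Γ l) (Phi Γ (evalWord Γ t) q) = _
    rw [ih, Phi_letter]
    rfl

noncomputable def emptyRed : Red Γ := ⟨[], noCancel_nil Γ⟩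

noncomputable def normP (w : List (Ltr V)) : Red Γ := w.foldr (pushP Γ) (emptyRed Γ)

theorem foldr_pushQ (w : List (Ltr V)) :
    w.foldr (fun l acc => pushQ Γ l acc) (Quotient.mk _ (emptyRed Γ)) =
      Quotient.mk _ (normP Γ w) := by
  induction w with
  | nil => rfl
  | cons l t ih =>
    show pushQ Γ l (t.foldr (fun l acc => pushQ Γ l acc) (Quotient.mk _ (emptyRed Γ))) = _
    rw [ih]
    rfl

theorem normP_length (w : List (Ltr V)) : (normP Γ w).1.length ≤ w.length := by
  induction w with
  | nil => exact Nat.le_refl 0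
  | cons l t ih =>
    have := push_length Γ l (normP Γ t).1
    show (push Γ l (normP Γ t).1).length ≤ t.length + 1
    omega

theorem normP_of_noCancel {w : List (Ltr V)} (hw : ¬ HasCancel Γ w) : (normP Γ w).1 = w := by
  induction w with
  | nil => rfl
  | cons l t ih =>
    have ht := ih (noCancel_tail Γ hw)
    show push Γ l (normP Γ t).1 = l :: t
    rw [ht]
    exact push_of_noCancel Γ hw

/-- KEY THEOREM: reduced words are geodesic -/
theorem reduced_min {w w' : List (Ltr V)} (hw : ¬ HasCancel Γ w)
    (h : evalWord Γ w' = evalWord Γ w) : w.length ≤ w'.length := by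
  have h1 := Phi_eval Γ w (Quotient.mk _ (emptyRed Γ))
  have h2 := Phi_eval Γ w' (Quotient.mk _ (emptyRed Γ))
  rw [h] at h2
  rw [h1, foldr_pushQ, foldr_pushQ] at h2
  have hse : SE Γ (normP Γ w).1 (normP Γ w').1 := Quotient.exact h2
  have hlen := SE.length_eq Γ hse
  rw [normP_of_noCancel Γ hw] at hlen
  calc w.length = (normP Γ w').1.length := hlen
    _ ≤ w'.length := normP_length Γ w'

/-- a non-geodesic word has a cancellation pair -/
theorem hasCancel_of_not_geodesic {w : List (Ltr V)}
    (h : wlen Γ (evalWord Γ w) < w.length) : HasCancel Γ w := by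
  by_contra hnc
  obtain ⟨w', hw', hlen⟩ := wlen_spec Γ (evalWord Γ w)
  have := reduced_min Γ hnc hw'
  omega

end Raag
namespace Raag
open List
variable {V : Type} (Γ : SimpleGraph V)

theorem wpow_succ {α : Type*} (w : List α) (n : ℕ) : wpow w (n + 1) = w ++ wpow w n := by
  simp [wpow, List.replicate_succ]

theorem eval_wpow (w : List (Ltr V)) (n : ℕ) :
    evalWord Γ (wpow w n) = (evalWord Γ w) ^ n := by
  induction n with
  | zero => simp [wpow]; rfl
  | succ n ih => rw [wpow_succ, evalWord_append, ih, ← pow_succ']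

theorem length_wpow {α : Type*} (w : List α) (n : ℕ) :
    (wpow w n).length = n * w.length := by
  induction n with
  | zero => simp [wpow]
  | succ n ih => rw [wpow_succ]; simp [ih]; ring

theorem pow_len {g : RAAG Γ} {w : List (Ltr V)} (hev : evalWord Γ w = g)
    (hlen : w.length = wlen Γ g) (h2 : wlen Γ (g * g) = 2 * wlen Γ g) :
    ∀ m : ℕ, wlen Γ (g ^ m) = m * wlen Γ g := by
  intro m
  induction m using Nat.strong_induction_on with
  | _ m ih =>
    match m with
    | 0 => simpa using wlen_one Γ
    | 1 => simpa using hlen.symm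
    | 2 => rw [pow_two, h2]
    | (n + 3) =>
      have hevp : evalWord Γ (wpow w (n + 3)) = g ^ (n + 3) := by rw [eval_wpow, hev]
      have hlenp : (wpow w (n + 3)).length = (n + 3) * wlen Γ g := by
        rw [length_wpow, hlen]
      have hub : wlen Γ (g ^ (n + 3)) ≤ (n + 3) * wlen Γ g := by
        have := wlen_le Γ hevp
        omega
      rcases Nat.lt_or_ge (wlen Γ (g ^ (n + 3))) ((n + 3) * wlen Γ g) with hlt | hge
      · exfalso
        have hcan : HasCancel Γ (wpow w (n + 3)) := by
          apply hasCancel_of_not_geodesic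
          rw [hevp, hlenp]
          exact hlt
        obtain ⟨v, b, a, c, d, hc, hdec⟩ := hcan
        rw [wpow_succ] at hdec
        have hdec' : w ++ wpow w (n + 2) = a ++ ((v, b) :: (c ++ (v, !b) :: d)) := by
          rw [hdec]; simp
        -- contradiction helpers
        have contra_next : HasCancel Γ (wpow w (n + 2)) → False := by
          intro hh
          have h3 := hasCancel_wlen Γ hh
          rw [eval_wpow, hev, length_wpow, hlen, ih (n + 2) (by omega)] at h3
          omega
        have contra_w : HasCancel Γ w → False := by
          intro hh
          have h3 := hasCancel_wlen Γ hh
          rw [hev, ← hlen] at h3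
          omega
        have contra_ww : HasCancel Γ (w ++ w) → False := by
          intro hh
          have h3 := hasCancel_wlen Γ hh
          rw [evalWord_append, hev, h2, ← hlen] at h3
          simp only [List.length_append] at h3
          omega
        rcases append_eq_append_cases w (wpow w (n + 2)) a ((v, b) :: (c ++ (v, !b) :: d))
          hdec' with ⟨k, hk1, hk2⟩ | ⟨k, hk1, hk2⟩
        · -- a = w ++ k : pair inside later copies
          exact contra_next ⟨v, b, k, c, d, hc, by rw [hk2]; simp⟩
        · -- w = a ++ k
          rcases k with _ | ⟨k0, k'⟩
          · rw [nil_append] at hk2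
            exact contra_next ⟨v, b, [], c, d, hc, by rw [← hk2]; simp⟩
          · injection hk2 with hk0 hk2
            subst hk0
            have hw_has : (v, b) ∈ w := by rw [hk1]; simp
            have hk2' : c ++ (v, !b) :: d = k' ++ wpow w (n + 2) := by
              rw [hk2]; simp only [List.append_eq]
            rcases append_eq_append_cases c ((v, !b) :: d) k' (wpow w (n + 2)) hk2' with
              ⟨j, hj1, hj2⟩ | ⟨j, hj1, hj2⟩
            · -- k' = c ++ j, (v,!b) :: d = j ++ wpow w (n+2)
              rcases j with _ | ⟨j0, j'⟩
              · -- wpow w (n+2) = (v,!b) :: d ; pair straddles copies 1-2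
                rw [nil_append] at hj2
                rw [append_nil] at hj1
                have hx : (v, !b) :: d = w ++ wpow w (n + 1) := by
                  rw [hj2, wpow_succ]
                rcases hw : w with _ | ⟨w0, wt⟩
                · rw [hw] at hw_has; cases hw_has
                · rw [hw] at hx
                  injection hx with hx0 hx1
                  have hw1 : w = a ++ (v, b) :: c := by rw [hk1, hj1]
                  have hw2 : w = (v, !b) :: wt := by rw [hw, ← hx0]
                  exact contra_ww ⟨v, b, a, c, wt, hc, by rw [← hw1, ← hw2]⟩
              · -- pair inside first copy
                injection hj2 with hj0 hjd
                exact contra_w ⟨v, b, a, c, j', hc, by rw [hk1, hj1, ← hj0]; simp⟩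
            · -- c = k' ++ j, wpow w (n+2) = j ++ (v,!b) :: d
              have hj2' : w ++ wpow w (n + 1) = j ++ ((v, !b) :: d) := by
                rw [← wpow_succ, hj2]
              rcases append_eq_append_cases w (wpow w (n + 1)) j ((v, !b) :: d) hj2' with
                ⟨i, hi1, hi2⟩ | ⟨i, hi1, hi2⟩
              · -- j = w ++ i : a whole copy of w inside c
                have : (v, b) ∈ c := by rw [hj1, hi1]; simp [hw_has]
                exact (hc _ this).1 rfl
              · -- w = j ++ i
                rcases i with _ | ⟨i0, i'⟩
                · rw [append_nil] at hi1
                  have : (v, b) ∈ c := by rw [hj1, ← hi1]; simp [hw_has]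
                  exact (hc _ this).1 rfl
                · injection hi2 with hi0 hi2
                  have hw2 : w = j ++ ((v, !b) :: i') := by rw [hi1, ← hi0]
                  refine contra_ww ⟨v, b, a, c, i', hc, ?_⟩
                  calc w ++ w = (a ++ (v, b) :: k') ++ (j ++ ((v, !b) :: i')) := by
                        rw [← hk1, ← hw2]
                    _ = a ++ (v, b) :: (k' ++ j) ++ (v, !b) :: i' := by simp
                    _ = a ++ (v, b) :: c ++ (v, !b) :: i' := by rw [hj1]
      · exact le_antisymm hub hge

theorem wlen_pow_le (g : RAAG Γ) (k : ℕ) : wlen Γ (g ^ k) ≤ k * wlen Γ g := by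
  induction k with
  | zero => simpa using wlen_one Γ
  | succ k ih =>
    rw [pow_succ]
    calc wlen Γ (g ^ k * g) ≤ wlen Γ (g ^ k) + wlen Γ g := wlen_mul_le Γ _ _
      _ ≤ k * wlen Γ g + wlen Γ g := by omega
      _ = (k + 1) * wlen Γ g := by ring

end Raag

theorem stmt7 {V : Type} (Γ : SimpleGraph V) (g : RAAG Γ)
    (h : ∃ n : ℕ, 2 ≤ n ∧ wlen Γ (g ^ n) = n * wlen Γ g) :
    ∀ m : ℕ, 2 ≤ m → wlen Γ (g ^ m) = m * wlen Γ g := by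
  obtain ⟨n, hn2, hn⟩ := h
  -- first, |g²| = 2|g|
  have hsplit : g ^ n = g ^ 2 * g ^ (n - 2) := by
    rw [← pow_add]
    congr 1
    omega
  have hA : wlen Γ (g ^ n) ≤ wlen Γ (g ^ 2) + wlen Γ (g ^ (n - 2)) := by
    rw [hsplit]; exact Raag.wlen_mul_le Γ _ _
  have hB : wlen Γ (g ^ 2) ≤ 2 * wlen Γ g := Raag.wlen_pow_le Γ g 2
  have hC : wlen Γ (g ^ (n - 2)) ≤ (n - 2) * wlen Γ g := Raag.wlen_pow_le Γ g (n - 2)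
  have hD : n * wlen Γ g = (n - 2) * wlen Γ g + 2 * wlen Γ g := by
    rw [← Nat.add_mul]
    congr 1
    omega
  have h2 : wlen Γ (g ^ 2) = 2 * wlen Γ g := by omega
  have h2' : wlen Γ (g * g) = 2 * wlen Γ g := by rw [← pow_two]; exact h2
  obtain ⟨w, hev, hlen⟩ := Raag.wlen_spec Γ g
  intro m _
  exact Raag.pow_len Γ hev hlen h2' m
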